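/- arXiv:1710.07940 — 3 statements merged into one kernel-verified Lean document; each statement's English description precedes it below -/
import Mathlib

section
/- Let γ be a real symplectic 2n×2n matrix and λ an eigenvalue of γ on the unit circle. Then ℂ^{2n} decomposes as the Krein-orthogonal direct sum E_λ ⊕ F_λ, where E_λ is the generalized eigenspace of λ and F_λ is the sum of generalized eigenspaces over all other eigenvalues. -/
open Matrix Complex

noncomputable def JmatR (n : ℕ) : Matrix (Fin n ⊕ Fin n) (Fin n ⊕ Fin n) ℝ :=
  Matrix.fromBlocks 0 1 (-1) 0

noncomputable def Jmat (n : ℕ) : Matrix (Fin n ⊕ Fin n) (Fin n ⊕ Fin n) ℂ :=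
  Matrix.fromBlocks 0 1 (-1) 0

/-- The Krein form `(x,y)_G = i ⟨x, J y⟩`. -/
noncomputable def krein (n : ℕ) (x y : (Fin n ⊕ Fin n) → ℂ) : ℂ :=
  Complex.I * ∑ j, x j * (starRingEnd ℂ) ((Jmat n).mulVec y j)

/-- The generalized eigenspace `E_λ = ker (λI - γ)^{2n}` as a submodule of `ℂ^{2n}`. -/
noncomputable def genEig (n : ℕ) (M : Matrix (Fin n ⊕ Fin n) (Fin n ⊕ Fin n) ℂ)
    (lam : ℂ) : Submodule ℂ ((Fin n ⊕ Fin n) → ℂ) :=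
  LinearMap.ker (Matrix.toLin' ((lam • (1 : Matrix (Fin n ⊕ Fin n) (Fin n ⊕ Fin n) ℂ) - M) ^ (2 * n)))

open ComplexConjugate

/-!
A real symplectic `γ` preserves the bilinear form `b(x, y) = xᵀ J y`, and for such an isometry
generalized eigenvectors for `λ` and `ν` are `b`-orthogonal as soon as `λν ≠ 1`. The Krein form
is `(x, y)_G = i b(x, ȳ)`, and since `γ` is real, `ȳ` is a generalized eigenvector for `μ̄`
whenever `y` is one for `μ`. For `|λ| = 1` we have `λμ̄ = 1` only when `μ = λ`, so `E_λ` is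
Krein-orthogonal to every other generalized eigenspace. The direct sum itself is the
generalized eigenspace decomposition of `γ` over `ℂ`.
-/

namespace Matrix

section Isometry

variable {R m : Type*} [CommRing R] [Fintype m] {M J : Matrix m m R}

theorem dotProduct_mulVec_mulVec_of_transpose_mul_mul (hM : Mᵀ * J * M = J) (u v : m → R) :
    (M *ᵥ u) ⬝ᵥ J *ᵥ (M *ᵥ v) = u ⬝ᵥ J *ᵥ v := by
  rw [mulVec_mulVec, dotProduct_mulVec, dotProduct_mulVec, ← vecMul_transpose, vecMul_vecMul,
    ← Matrix.mul_assoc, hM]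

variable [DecidableEq m]

theorem mulVec_eq_sub_smul_mulVec_add (μ : R) (x : m → R) :
    M *ᵥ x = (M - μ • 1) *ᵥ x + μ • x := by
  rw [sub_mulVec, smul_mulVec, one_mulVec, sub_add_cancel]

/-- Writing `A = M - λ`, `B = M - ν`, invariance `(Mu, Mv) = (u, v)` expands to
`(1 - λν)(u, v) = (Au, Bv) + ν (Au, v) + λ (u, Bv)`, whose right side vanishes by induction on
the nilpotency orders of `A` on `u` and `B` on `v`. -/
theorem dotProduct_mulVec_eq_zero_of_transpose_mul_mul [NoZeroDivisors R]
    (hM : Mᵀ * J * M = J) {lam nu : R} (hln : lam * nu ≠ 1) {P Q : ℕ} {x y : m → R}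
    (hx : ((M - lam • 1) ^ P) *ᵥ x = 0) (hy : ((M - nu • 1) ^ Q) *ᵥ y = 0) :
    x ⬝ᵥ J *ᵥ y = 0 := by
  induction P generalizing x Q y with
  | zero => rw [pow_zero, one_mulVec] at hx; rw [hx, zero_dotProduct]
  | succ P ihP =>
    induction Q generalizing y with
    | zero => rw [pow_zero, one_mulVec] at hy; rw [hy, mulVec_zero, dotProduct_zero]
    | succ Q ihQ =>
      rw [pow_succ, ← mulVec_mulVec] at hx hy
      have hAB := ihP hx hy
      have hAy := ihP hx (Q := Q + 1) (by rwa [pow_succ, ← mulVec_mulVec])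
      have hxB := ihQ hy
      have hexp := dotProduct_mulVec_mulVec_of_transpose_mul_mul hM x y
      rw [mulVec_eq_sub_smul_mulVec_add lam x, mulVec_eq_sub_smul_mulVec_add nu y] at hexp
      simp only [mulVec_add, mulVec_smul, add_dotProduct, dotProduct_add, smul_dotProduct,
        dotProduct_smul, smul_eq_mul, hAB, hAy, hxB] at hexp
      have hfactor : (1 - lam * nu) * (x ⬝ᵥ J *ᵥ y) = 0 := by linear_combination -hexp
      exact (mul_eq_zero.mp hfactor).resolve_left (sub_ne_zero.mpr hln.symm)

end Isometry

theorem map_transpose_mul_mul {R S m : Type*} [CommRing R] [CommRing S] [Fintype m]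
    (f : R →+* S) {M J : Matrix m m R} (hM : Mᵀ * J * M = J) :
    (M.map f)ᵀ * J.map f * M.map f = J.map f := by
  simpa only [Matrix.map_mul, transpose_map] using congr_arg (·.map f) hM

theorem hasEigenvalue_toLin'_iff {R m : Type*} [CommRing R] [Fintype m] [DecidableEq m]
    (M : Matrix m m R) (mu : R) :
    Module.End.HasEigenvalue (toLin' M) mu ↔ ∃ v, v ≠ 0 ∧ M *ᵥ v = mu • v := by
  simp only [Module.End.hasEigenvalue_iff, Submodule.ne_bot_iff, Module.End.mem_eigenspace_iff,
    toLin'_apply, and_comm]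

end Matrix

theorem JmatR_map_ofReal (n : ℕ) : (JmatR n).map ofRealHom = Jmat n := by
  simp [JmatR, Jmat, fromBlocks_map, Matrix.map_neg]

theorem Jmat_map_conj (n : ℕ) : (Jmat n).map (starRingEnd ℂ) = Jmat n := by
  simp [Jmat, fromBlocks_map, Matrix.map_neg]

theorem krein_eq_dotProduct (n : ℕ) (x y : (Fin n ⊕ Fin n) → ℂ) :
    krein n x y = I * (x ⬝ᵥ Jmat n *ᵥ star y) := by
  simp only [krein, dotProduct, RingHom.map_mulVec, Jmat_map_conj]
  rfl

theorem krein_add_right (n : ℕ) (x y z : (Fin n ⊕ Fin n) → ℂ) :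
    krein n x (y + z) = krein n x y + krein n x z := by
  simp only [krein_eq_dotProduct, star_add, mulVec_add, dotProduct_add, mul_add]

theorem krein_zero_right (n : ℕ) (x : (Fin n ⊕ Fin n) → ℂ) : krein n x 0 = 0 := by
  simp [krein_eq_dotProduct]

theorem map_ofReal_sub_smul_pow_mulVec_star {m : Type*} [Fintype m] [DecidableEq m]
    (M : Matrix m m ℝ) (mu : ℂ) (k : ℕ) (y : m → ℂ) :
    ((M.map ofReal - conj mu • 1) ^ k) *ᵥ star y
      = star (((M.map ofReal - mu • 1) ^ k) *ᵥ y) := by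
  have hconj : ((M.map ofReal - mu • 1) ^ k).map (starRingEnd ℂ)
      = (M.map ofReal - conj mu • 1) ^ k := by
    have hsub : (M.map ofReal - mu • 1).map (starRingEnd ℂ)
        = M.map ofReal - conj mu • 1 := by
      ext i j
      simp [Matrix.one_apply, apply_ite (starRingEnd ℂ)]
    rw [← hsub]
    exact map_pow (starRingEnd ℂ).mapMatrix _ k
  ext i
  rw [Pi.star_apply, star_def, RingHom.map_mulVec, hconj]
  rfl

theorem mem_genEig_iff (n : ℕ) (M : Matrix (Fin n ⊕ Fin n) (Fin n ⊕ Fin n) ℂ) (mu : ℂ)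
    (x : (Fin n ⊕ Fin n) → ℂ) :
    x ∈ genEig n M mu ↔ ((M - mu • 1) ^ (2 * n)) *ᵥ x = 0 := by
  rw [genEig, LinearMap.mem_ker, toLin'_apply, ← neg_sub, (even_two_mul n).neg_pow]

theorem genEig_eq_maxGenEigenspace (n : ℕ) (M : Matrix (Fin n ⊕ Fin n) (Fin n ⊕ Fin n) ℂ)
    (mu : ℂ) : genEig n M mu = Module.End.maxGenEigenspace (toLin' M) mu := by
  have hfinrank : Module.finrank ℂ ((Fin n ⊕ Fin n) → ℂ) ≤ 2 * n := by simp [two_mul]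
  rw [Module.End.maxGenEigenspace_eq_genEigenspace_finrank,
    ← Module.End.genEigenspace_eq_genEigenspace_finrank_of_le _ _ hfinrank,
    Module.End.genEigenspace_nat]
  ext x
  rw [mem_genEig_iff, LinearMap.mem_ker, ← toLin'_apply, toLin'_pow, map_sub, map_smul, toLin'_one]
  rfl

theorem mul_conj_ne_one_of_norm_eq_one {lam mu : ℂ} (hU : ‖lam‖ = 1) (hne : mu ≠ lam) :
    lam * conj mu ≠ 1 := fun h =>
  hne (star_injective ((inv_eq_of_mul_eq_one_right h).symm.trans (inv_eq_conj hU)))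

theorem krein_eq_zero_of_mem_genEig {n : ℕ} {γ : Matrix (Fin n ⊕ Fin n) (Fin n ⊕ Fin n) ℝ}
    (hγ : γᵀ * JmatR n * γ = JmatR n) {lam mu : ℂ} (hU : ‖lam‖ = 1) (hne : mu ≠ lam)
    {x y : (Fin n ⊕ Fin n) → ℂ} (hx : x ∈ genEig n (γ.map ofReal) lam)
    (hy : y ∈ genEig n (γ.map ofReal) mu) :
    krein n x y = 0 := by
  have hsymp : (γ.map ofReal)ᵀ * Jmat n * γ.map ofReal = Jmat n := by
    rw [← JmatR_map_ofReal]
    exact map_transpose_mul_mul ofRealHom hγ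
  rw [mem_genEig_iff] at hx hy
  have hy_conj := map_ofReal_sub_smul_pow_mulVec_star γ mu (2 * n) y
  rw [hy, star_zero] at hy_conj
  rw [krein_eq_dotProduct, dotProduct_mulVec_eq_zero_of_transpose_mul_mul hsymp
    (mul_conj_ne_one_of_norm_eq_one hU hne) hx hy_conj, mul_zero]

theorem Module.End.biSup_maxGenEigenspace_hasEigenvalue {R M : Type*} [CommRing R]
    [AddCommGroup M] [Module R M] (f : Module.End R M) (lam : R) :
    ⨆ mu ∈ {mu | mu ≠ lam ∧ f.HasEigenvalue mu}, f.maxGenEigenspace mu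
      = ⨆ mu ≠ lam, f.maxGenEigenspace mu := by
  refine le_antisymm (iSup₂_le fun mu hmu => le_iSup₂_of_le mu hmu.1 le_rfl)
    (iSup₂_le fun mu hmu => ?_)
  by_cases hbot : f.maxGenEigenspace mu = ⊥
  · exact hbot ▸ bot_le
  · exact le_iSup₂_of_le mu ⟨hmu, HasUnifEigenvalue.lt zero_lt_one hbot⟩ le_rfl

theorem krein_orthogonal_decomposition_general (n : ℕ)
    (γ : Matrix (Fin n ⊕ Fin n) (Fin n ⊕ Fin n) ℝ)
    (hγ : γᵀ * JmatR n * γ = JmatR n)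
    (lam : ℂ) (hU : ‖lam‖ = 1)
    (F : Submodule ℂ ((Fin n ⊕ Fin n) → ℂ))
    (hF : F = ⨆ mu ∈ {mu : ℂ | mu ≠ lam ∧ ∃ v, v ≠ 0 ∧ (γ.map Complex.ofReal).mulVec v = mu • v},
      genEig n (γ.map Complex.ofReal) mu) :
    genEig n (γ.map Complex.ofReal) lam ⊔ F = ⊤ ∧
    genEig n (γ.map Complex.ofReal) lam ⊓ F = ⊥ ∧
    (∀ x ∈ genEig n (γ.map Complex.ofReal) lam, ∀ y ∈ F, krein n x y = 0) := by
  simp_rw [← hasEigenvalue_toLin'_iff, genEig_eq_maxGenEigenspace] at hF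
  rw [Module.End.biSup_maxGenEigenspace_hasEigenvalue] at hF
  refine ⟨?_, ?_, fun x hx y hy => ?_⟩
  · rw [hF, genEig_eq_maxGenEigenspace, ← iSup_split_single,
      Module.End.iSup_maxGenEigenspace_eq_top]
  · rw [hF, genEig_eq_maxGenEigenspace]
    exact (Module.End.independent_maxGenEigenspace _ lam).eq_bot
  · rw [hF, iSup_subtype'] at hy
    refine Submodule.iSup_induction _ (motive := fun y => krein n x y = 0) hy
      (fun mu z hz => ?_) (krein_zero_right n x) fun y₁ y₂ h₁ h₂ => ?_
    · rw [← genEig_eq_maxGenEigenspace] at hz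
      exact krein_eq_zero_of_mem_genEig hγ hU mu.2 hx hz
    · rw [krein_add_right, h₁, h₂, add_zero]

/-- For `λ` on the unit circle, `ℂ^{2n} = E_λ ⊕ F_λ` is a Krein-orthogonal decomposition,
where `F_λ` is the sum of the generalized eigenspaces of the other eigenvalues. -/
theorem krein_orthogonal_decomposition (n : ℕ)
    (γ : Matrix (Fin n ⊕ Fin n) (Fin n ⊕ Fin n) ℝ)
    (hγ : γᵀ * JmatR n * γ = JmatR n)
    (lam : ℂ) (hU : ‖lam‖ = 1)
    (hlam : ∃ v, v ≠ 0 ∧ (γ.map Complex.ofReal).mulVec v = lam • v)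
    (F : Submodule ℂ ((Fin n ⊕ Fin n) → ℂ))
    (hF : F = ⨆ mu ∈ {mu : ℂ | mu ≠ lam ∧ ∃ v, v ≠ 0 ∧ (γ.map Complex.ofReal).mulVec v = mu • v},
      genEig n (γ.map Complex.ofReal) mu) :
    genEig n (γ.map Complex.ofReal) lam ⊔ F = ⊤ ∧
    genEig n (γ.map Complex.ofReal) lam ⊓ F = ⊥ ∧
    (∀ x ∈ genEig n (γ.map Complex.ofReal) lam, ∀ y ∈ F, krein n x y = 0) :=
  krein_orthogonal_decomposition_general n γ hγ lam hU F hF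
end

section
/- If γ is a real symplectic 2n×2n matrix and λ is an eigenvalue of γ on the unit circle that is a simple root of the characteristic polynomial, then λ is Krein definite: the quadratic form x ↦ (x,x)_G is either strictly positive or strictly negative on all nonzero vectors of the eigenspace ker(λI - γ). -/
open Matrix Complex

/-!
Since `γ` preserves the form `⟨x, J y⟩` and `|λ| = 1`, for an eigenvector `x` the row vector
`w = x̄ᵀ J` is a left eigenvector of `γ` for the same eigenvalue `λ`, and `w ≠ 0` as `J` is
invertible. For a simple eigenvalue, left and right eigenvectors are never orthogonal: write the
characteristic polynomial as `(X - λ) q` with `q(λ) ≠ 0`; by Cayley–Hamilton `q(γ)` maps into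
the eigenspace, which is the line through `x`, so `w x = 0` would give
`q(λ) w = w q(γ) = 0`. Hence `(x, x)_G ≠ 0`, and a Hermitian form that does not vanish on a
punctured line has constant sign there.
-/

open Polynomial Module

theorem Submodule.exists_smul_eq_of_finrank_le_one {K E : Type*} [Field K] [AddCommGroup E]
    [Module K E] [FiniteDimensional K E] {V : Submodule K E} (hV : finrank K V ≤ 1) {x y : E}
    (hx : x ∈ V) (hx0 : x ≠ 0) (hy : y ∈ V) : ∃ c : K, c • x = y := by
  have hspan : span K {x} = V :=
    eq_of_le_of_finrank_le ((span_singleton_le_iff_mem x V).mpr hx)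
      (hV.trans (finrank_span_singleton hx0).ge)
  exact mem_span_singleton.mp (hspan ▸ hy)

namespace Matrix

section Field

variable {m R K : Type*} [Fintype m] [DecidableEq m] [CommRing R] [Field K]

theorem mem_eigenspace_toLin'_iff {A : Matrix m m R} {μ : R} {x : m → R} :
    x ∈ Module.End.eigenspace (toLin' A) μ ↔ A *ᵥ x = μ • x := by
  rw [Module.End.mem_eigenspace_iff, toLin'_apply]

theorem vecMul_pow_of_vecMul_eq_smul {A : Matrix m m R} {μ : R} {w : m → R}
    (hw : w ᵥ* A = μ • w) (k : ℕ) : w ᵥ* A ^ k = μ ^ k • w := by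
  induction k with
  | zero => simp
  | succ k ih => rw [pow_succ, ← vecMul_vecMul, ih, smul_vecMul, hw, smul_smul, pow_succ]

theorem vecMul_aeval_of_vecMul_eq_smul {A : Matrix m m R} {μ : R} {w : m → R}
    (hw : w ᵥ* A = μ • w) (p : R[X]) : w ᵥ* aeval A p = p.eval μ • w := by
  induction p using Polynomial.induction_on' with
  | add p q hp hq => simp only [map_add, vecMul_add, hp, hq, eval_add, add_smul]
  | monomial k a =>
    rw [aeval_monomial, ← Algebra.smul_def, vecMul_smul, vecMul_pow_of_vecMul_eq_smul hw,
      eval_monomial, smul_smul]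

theorem mulVec_aeval_mem_eigenspace {A : Matrix m m R} {μ : R} {q : R[X]}
    (hq : A.charpoly = (X - C μ) * q) (y : m → R) :
    aeval A q *ᵥ y ∈ Module.End.eigenspace (toLin' A) μ := by
  have h := congrArg (fun p => aeval A p *ᵥ y) hq
  simp only [aeval_self_charpoly, zero_mulVec, map_mul, map_sub, aeval_X, aeval_C,
    Algebra.algebraMap_eq_smul_one, ← mulVec_mulVec, sub_mulVec, smul_mulVec, one_mulVec] at h
  exact mem_eigenspace_toLin'_iff.mpr (sub_eq_zero.mp h.symm)

omit [DecidableEq m] in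
theorem vecMul_eq_smul_of_conjTranspose_mul_mul_eq [StarRing R] {A G : Matrix m m R}
    (hAG : Aᴴ * G * A = G) {μ : R} (hμ : star μ * μ = 1) {x : m → R} (hx : A *ᵥ x = μ • x) :
    (star x ᵥ* G) ᵥ* A = μ • (star x ᵥ* G) := by
  have h : star x ᵥ* G = star μ • ((star x ᵥ* G) ᵥ* A) := by
    conv_lhs => rw [← hAG, ← vecMul_vecMul, ← vecMul_vecMul, ← star_mulVec, hx, star_smul]
    rw [smul_vecMul, smul_vecMul]
  rw [h, smul_smul, mul_comm, hμ, one_smul, ← h]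

theorem finrank_eigenspace_le_one {A : Matrix m m K} {μ : K}
    (h : A.charpoly.rootMultiplicity μ = 1) :
    finrank K (Module.End.eigenspace (toLin' A) μ) ≤ 1 :=
  h ▸ charpoly_toLin' A ▸ LinearMap.finrank_eigenspace_le _ μ

theorem dotProduct_ne_zero_of_rootMultiplicity_eq_one {A : Matrix m m K} {μ : K}
    (h : A.charpoly.rootMultiplicity μ = 1) {x w : m → K} (hx0 : x ≠ 0) (hx : A *ᵥ x = μ • x)
    (hw0 : w ≠ 0) (hw : w ᵥ* A = μ • w) : w ⬝ᵥ x ≠ 0 := by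
  obtain ⟨q, hq, hqμ⟩ :=
    exists_eq_pow_rootMultiplicity_mul_and_not_dvd A.charpoly A.charpoly_monic.ne_zero μ
  rw [h, pow_one] at hq
  intro hwx
  refine hw0 (dotProduct_eq_zero w fun y => ?_)
  obtain ⟨c, hc⟩ := Submodule.exists_smul_eq_of_finrank_le_one
    (V := Module.End.eigenspace (toLin' A) μ) (finrank_eigenspace_le_one h)
    (mem_eigenspace_toLin'_iff.mpr hx) hx0 (mulVec_aeval_mem_eigenspace hq y)
  have hqy : q.eval μ * (w ⬝ᵥ y) = 0 := by
    rw [← smul_eq_mul, ← smul_dotProduct, ← vecMul_aeval_of_vecMul_eq_smul hw,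
      ← dotProduct_mulVec, ← hc, dotProduct_smul, hwx, smul_zero]
  exact (mul_eq_zero.mp hqy).resolve_left fun hq0 => hqμ (dvd_iff_isRoot.mpr hq0)

theorem star_dotProduct_mulVec_self_ne_zero [StarRing K] {A G : Matrix m m K} (hG : IsUnit G)
    (hAG : Aᴴ * G * A = G) {μ : K} (hμ : star μ * μ = 1)
    (h : A.charpoly.rootMultiplicity μ = 1) {x : m → K} (hx0 : x ≠ 0) (hx : A *ᵥ x = μ • x) :
    star x ⬝ᵥ (G *ᵥ x) ≠ 0 := by
  have hw0 : star x ᵥ* G ≠ 0 := by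
    rw [← zero_vecMul G, (vecMul_injective_of_isUnit hG).ne_iff]
    exact star_ne_zero.mpr hx0
  rw [dotProduct_mulVec]
  exact dotProduct_ne_zero_of_rootMultiplicity_eq_one h hx0 hx hw0
    (vecMul_eq_smul_of_conjTranspose_mul_mul_eq hAG hμ hx)

end Field

section RCLike

variable {m 𝕜 : Type*} [Fintype m] [RCLike 𝕜]

theorem star_smul_dotProduct_mulVec_smul (H : Matrix m m 𝕜) (c : 𝕜) (x : m → 𝕜) :
    star (c • x) ⬝ᵥ (H *ᵥ (c • x)) = ((‖c‖ ^ 2 : ℝ) : 𝕜) * (star x ⬝ᵥ (H *ᵥ x)) := by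
  rw [mulVec_smul, dotProduct_smul, star_smul, smul_dotProduct, smul_smul, smul_eq_mul,
    RCLike.star_def, RCLike.mul_conj, RCLike.ofReal_pow]

theorem IsHermitian.re_pos_or_re_neg_of_finrank_le_one {H : Matrix m m 𝕜} (hH : H.IsHermitian)
    {V : Submodule 𝕜 (m → 𝕜)} (hV : finrank 𝕜 V ≤ 1)
    (hne : ∀ x, x ≠ 0 → x ∈ V → star x ⬝ᵥ (H *ᵥ x) ≠ 0) :
    (∀ x, x ≠ 0 → x ∈ V → 0 < RCLike.re (star x ⬝ᵥ (H *ᵥ x))) ∨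
      (∀ x, x ≠ 0 → x ∈ V → RCLike.re (star x ⬝ᵥ (H *ᵥ x)) < 0) := by
  by_cases hV0 : ∀ x, x ≠ 0 → x ∉ V
  · exact .inl fun x hx0 hxV => absurd hxV (hV0 x hx0)
  obtain ⟨x₀, hx₀0, hx₀V⟩ : ∃ x₀, x₀ ≠ 0 ∧ x₀ ∈ V := by simpa using hV0
  have hscale : ∀ x, x ≠ 0 → x ∈ V → ∃ r : ℝ, 0 < r ∧
      RCLike.re (star x ⬝ᵥ (H *ᵥ x)) = r * RCLike.re (star x₀ ⬝ᵥ (H *ᵥ x₀)) := by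
    intro x hx0 hxV
    obtain ⟨c, rfl⟩ := Submodule.exists_smul_eq_of_finrank_le_one hV hx₀V hx₀0 hxV
    have hc : c ≠ 0 := left_ne_zero_of_smul hx0
    exact ⟨‖c‖ ^ 2, by positivity, by rw [star_smul_dotProduct_mulVec_smul, RCLike.re_ofReal_mul]⟩
  have hre₀ : RCLike.re (star x₀ ⬝ᵥ (H *ᵥ x₀)) ≠ 0 := fun h =>
    hne x₀ hx₀0 hx₀V <| RCLike.ext (by simpa using h)
      (by simpa using hH.im_star_dotProduct_mulVec_self x₀)
  rcases hre₀.lt_or_gt with hneg | hpos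
  · refine .inr fun x hx0 hxV => ?_
    obtain ⟨r, hr, hx⟩ := hscale x hx0 hxV
    exact hx ▸ mul_neg_of_pos_of_neg hr hneg
  · refine .inl fun x hx0 hxV => ?_
    obtain ⟨r, hr, hx⟩ := hscale x hx0 hxV
    exact hx ▸ mul_pos hr hpos

end RCLike

end Matrix

theorem Jmat_eq_map (n : ℕ) : Jmat n = (JmatR n).map ofReal := by
  ext (i | i) (j | j) <;> simp [Jmat, JmatR, one_apply, apply_ite ofReal]

theorem conjTranspose_Jmat (n : ℕ) : (Jmat n)ᴴ = -Jmat n := by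
  simp [Jmat, fromBlocks_conjTranspose, fromBlocks_neg]

theorem Jmat_mul_Jmat (n : ℕ) : Jmat n * Jmat n = -1 := by
  simp [Jmat, fromBlocks_multiply, ← fromBlocks_one, fromBlocks_neg]

theorem isUnit_Jmat (n : ℕ) : IsUnit (Jmat n) :=
  IsUnit.of_mul_eq_one (-Jmat n) (by rw [mul_neg, Jmat_mul_Jmat, neg_neg])

theorem isHermitian_neg_I_smul_Jmat (n : ℕ) : (-I • Jmat n).IsHermitian := by
  rw [IsHermitian, conjTranspose_smul, conjTranspose_Jmat, star_neg, Complex.star_def, conj_I,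
    smul_neg, neg_smul, neg_neg, neg_smul]

theorem krein_self_eq (n : ℕ) (x : Fin n ⊕ Fin n → ℂ) :
    krein n x x = star x ⬝ᵥ ((-I • Jmat n) *ᵥ x) := by
  have h : krein n x x = I * (x ⬝ᵥ star (Jmat n *ᵥ x)) := rfl
  rw [h, star_mulVec, conjTranspose_Jmat, vecMul_neg, dotProduct_comm, neg_dotProduct,
    ← dotProduct_mulVec, smul_mulVec, dotProduct_smul, smul_eq_mul]
  ring

theorem conjTranspose_map_mul_Jmat_mul {n : ℕ} {γ : Matrix (Fin n ⊕ Fin n) (Fin n ⊕ Fin n) ℝ}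
    (hγ : γᵀ * JmatR n * γ = JmatR n) :
    (γ.map ofReal)ᴴ * Jmat n * γ.map ofReal = Jmat n := by
  rw [← conjTranspose_map _ (fun r => (conj_ofReal r).symm), conjTranspose_eq_transpose_of_trivial,
    Jmat_eq_map]
  have h := congrArg (RingHom.mapMatrix ofRealHom) hγ
  rwa [map_mul, map_mul] at h

theorem simple_eigenvalue_krein_definite_general (n : ℕ)
    (γ : Matrix (Fin n ⊕ Fin n) (Fin n ⊕ Fin n) ℝ)
    (hγ : γᵀ * JmatR n * γ = JmatR n)
    (lam : ℂ) (hU : ‖lam‖ = 1)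
    (hsimple : ((γ.map Complex.ofReal).charpoly).rootMultiplicity lam = 1) :
    (∀ x : (Fin n ⊕ Fin n) → ℂ, x ≠ 0 →
        (γ.map Complex.ofReal).mulVec x = lam • x → 0 < (krein n x x).re) ∨
    (∀ x : (Fin n ⊕ Fin n) → ℂ, x ≠ 0 →
        (γ.map Complex.ofReal).mulVec x = lam • x → (krein n x x).re < 0) := by
  have hlam : star lam * lam = 1 := by
    rw [Complex.star_def, Complex.conj_mul', hU]; norm_num
  have hne : ∀ x, x ≠ 0 → x ∈ Module.End.eigenspace (toLin' (γ.map ofReal)) lam →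
      star x ⬝ᵥ ((-I • Jmat n) *ᵥ x) ≠ 0 := by
    intro x hx0 hx
    rw [smul_mulVec, dotProduct_smul, smul_eq_mul]
    exact mul_ne_zero (neg_ne_zero.mpr I_ne_zero) <| star_dotProduct_mulVec_self_ne_zero
      (isUnit_Jmat n) (conjTranspose_map_mul_Jmat_mul hγ) hlam hsimple hx0
      (mem_eigenspace_toLin'_iff.mp hx)
  simpa only [krein_self_eq, mem_eigenspace_toLin'_iff, RCLike.re_to_complex]
    using (isHermitian_neg_I_smul_Jmat n).re_pos_or_re_neg_of_finrank_le_one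
      (finrank_eigenspace_le_one hsimple) hne

/-- A simple eigenvalue of a real symplectic matrix on the unit circle is Krein definite. -/
theorem simple_eigenvalue_krein_definite (n : ℕ)
    (γ : Matrix (Fin n ⊕ Fin n) (Fin n ⊕ Fin n) ℝ)
    (hγ : γᵀ * JmatR n * γ = JmatR n)
    (lam : ℂ) (hU : ‖lam‖ = 1)
    (hroot : ((γ.map Complex.ofReal).charpoly).IsRoot lam)
    (hsimple : ((γ.map Complex.ofReal).charpoly).rootMultiplicity lam = 1) :
    (∀ x : (Fin n ⊕ Fin n) → ℂ, x ≠ 0 →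
        (γ.map Complex.ofReal).mulVec x = lam • x → 0 < (krein n x x).re) ∨
    (∀ x : (Fin n ⊕ Fin n) → ℂ, x ≠ 0 →
        (γ.map Complex.ofReal).mulVec x = lam • x → (krein n x x).re < 0) :=
  simple_eigenvalue_krein_definite_general n γ hγ lam hU hsimple
end

section
/- Let γ(t, ε) solve the ODE ∂γ/∂t = J A(t, ε) γ with γ(0, ε) = Id, where A(t, ε) is symmetric, continuous in t, and continuously differentiable in ε. Define C(t, ε) = -γ(t,ε)ᵀ J ∂γ/∂ε(t,ε). Then C(t,ε) = ∫₀ᵗ γ(u,ε)ᵀ (∂A/∂ε)(u,ε) γ(u,ε) du; in particular C(t,ε) is a symmetric matrix. -/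
/-!
Write `C(t) = -γ(t)ᵀ J δγ(t)`, where `δγ = ∂γ/∂ε`. Since `γ(0, ε) = 1` for every `ε`, `δγ`
vanishes at `t = 0`, so `C(0) = 0`. Differentiating in `t` with `γ' = J A γ` and
`δγ' = J δA γ + J A δγ`, and using `Jᵀ = -J`, `J² = -1` and the symmetry of `A`, the two terms
containing `A` cancel and `C' = γᵀ δA γ`. The fundamental theorem of calculus gives the integral
formula, and the integrand is symmetric because `δA`, a derivative of symmetric matrices, is
symmetric.
-/

open Matrix

lemma JmatR_transpose (n : ℕ) : (JmatR n)ᵀ = -JmatR n := by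
  simp [JmatR, fromBlocks_transpose, fromBlocks_neg]

lemma JmatR_mul_self (n : ℕ) : JmatR n * JmatR n = -1 := by
  rw [← fromBlocks_one, fromBlocks_neg]
  simp [JmatR, fromBlocks_multiply]

section Calculus

variable {l m p : Type*}

lemma hasDerivAt_matrix_mul_apply [Fintype m] {M : ℝ → Matrix l m ℝ} {N : ℝ → Matrix m p ℝ}
    {M' : Matrix l m ℝ} {N' : Matrix m p ℝ} {t : ℝ}
    (hM : ∀ i j, HasDerivAt (fun s => M s i j) (M' i j) t)
    (hN : ∀ i j, HasDerivAt (fun s => N s i j) (N' i j) t) (i : l) (j : p) :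
    HasDerivAt (fun s => (M s * N s) i j) ((M' * N t + M t * N') i j) t := by
  simp only [mul_apply, Matrix.add_apply, ← Finset.sum_add_distrib]
  exact HasDerivAt.fun_sum fun k _ => (hM i k).mul (hN k j)

lemma transpose_eq_of_hasDerivAt {M : ℝ → Matrix m m ℝ} {M' : Matrix m m ℝ} {x : ℝ}
    (hM : ∀ e, (M e)ᵀ = M e) (hM' : ∀ i j, HasDerivAt (fun e => M e i j) (M' i j) x) :
    M'ᵀ = M' := by
  ext i j
  have hswap : (fun e => M e i j) = fun e => M e j i := by
    funext e
    rw [← hM e, transpose_apply, hM e]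
  exact (hM' j i).unique (hswap ▸ hM' i j)

lemma transpose_eq_of_apply_eq_intervalIntegral {C : Matrix m m ℝ} {F : ℝ → Matrix m m ℝ} {a b : ℝ}
    (hC : ∀ i j, C i j = ∫ u in a..b, F u i j) (hF : ∀ u, (F u)ᵀ = F u) : Cᵀ = C := by
  ext i j
  rw [transpose_apply, hC, hC]
  congr 1 with u
  rw [← hF u, transpose_apply, hF u]

end Calculus

section Symplectic

variable {m : Type*} [Fintype m] [DecidableEq m] {J : Matrix m m ℝ}

lemma neg_derivative_transpose_mul_mul (hJ : Jᵀ = -J) (hJJ : J * J = -1)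
    {B E G D : Matrix m m ℝ} (hB : Bᵀ = B) :
    -((J * B * G)ᵀ * J * D + Gᵀ * J * (J * E * G + J * B * D)) = Gᵀ * E * G := by
  have hJJ' : ∀ M : Matrix m m ℝ, J * (J * M) = -M := fun M => by
    rw [← Matrix.mul_assoc, hJJ, Matrix.neg_mul, Matrix.one_mul]
  simp only [transpose_mul, hJ, hB, Matrix.mul_add, Matrix.mul_neg, Matrix.neg_mul,
    Matrix.mul_assoc, hJJ']
  abel

lemma hasDerivAt_neg_transpose_mul_mul_apply {a δa g δg : ℝ → Matrix m m ℝ} {s : ℝ}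
    (hJ : Jᵀ = -J) (hJJ : J * J = -1) (ha : (a s)ᵀ = a s)
    (hg : ∀ i j, HasDerivAt (fun u => g u i j) ((J * a s * g s) i j) s)
    (hδg : ∀ i j, HasDerivAt (fun u => δg u i j) ((J * δa s * g s + J * a s * δg s) i j) s)
    (i j : m) :
    HasDerivAt (fun u => (-((g u)ᵀ * J * δg u)) i j) (((g s)ᵀ * δa s * g s) i j) s := by
  have hgJ : ∀ i j, HasDerivAt (fun u => ((g u)ᵀ * J) i j) (((J * a s * g s)ᵀ * J) i j) s := by
    intro i j
    simpa only [Matrix.mul_zero, add_zero] using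
      hasDerivAt_matrix_mul_apply (M := fun u => (g u)ᵀ) (N := fun _ => J)
        (M' := (J * a s * g s)ᵀ) (N' := 0) (fun i j => hg j i)
        (fun i j => hasDerivAt_const s (J i j)) i j
  have h := (hasDerivAt_matrix_mul_apply hgJ hδg i j).fun_neg
  rw [← Matrix.neg_apply, neg_derivative_transpose_mul_mul hJ hJJ ha] at h
  simpa only [Matrix.neg_apply] using h

end Symplectic

theorem C_integral_expression_general (n : ℕ)
    (A γ δA δγ : ℝ → ℝ → Matrix (Fin n ⊕ Fin n) (Fin n ⊕ Fin n) ℝ)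
    (hAsymm : ∀ t ε, (A t ε)ᵀ = A t ε)
    (hδAcont : ∀ ε i j, Continuous fun t => δA t ε i j)
    (hγ0 : ∀ ε, γ 0 ε = 1)
    (hODE : ∀ t ε i j, HasDerivAt (fun s => γ s ε i j) ((JmatR n * A t ε * γ t ε) i j) t)
    (hdε : ∀ t ε i j, HasDerivAt (fun e => γ t e i j) (δγ t ε i j) ε)
    (hdAε : ∀ t ε i j, HasDerivAt (fun e => A t e i j) (δA t ε i j) ε)
    (hmixed : ∀ t ε i j, HasDerivAt (fun s => δγ s ε i j)
      ((JmatR n * δA t ε * γ t ε + JmatR n * A t ε * δγ t ε) i j) t)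
    (t ε : ℝ) :
    (∀ i j, (-((γ t ε)ᵀ * JmatR n * δγ t ε)) i j
        = ∫ u in (0 : ℝ)..t, ((γ u ε)ᵀ * δA u ε * γ u ε) i j) ∧
    (-((γ t ε)ᵀ * JmatR n * δγ t ε))ᵀ = -((γ t ε)ᵀ * JmatR n * δγ t ε) := by
  have hδγ0 : δγ 0 ε = 0 := by
    ext i j
    have hconst : HasDerivAt (fun e => γ 0 e i j) 0 ε := by
      simpa only [hγ0] using hasDerivAt_const ε ((1 : Matrix _ _ ℝ) i j)
    exact (hdε 0 ε i j).unique hconst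
  have hγcont : Continuous fun s => γ s ε := continuous_pi fun i => continuous_pi fun j =>
    continuous_iff_continuousAt.2 fun s => (hODE s ε i j).continuousAt
  have hδAcont' : Continuous fun s => δA s ε := continuous_pi fun i => continuous_pi (hδAcont ε i)
  have hC : ∀ i j, (-((γ t ε)ᵀ * JmatR n * δγ t ε)) i j
      = ∫ u in (0 : ℝ)..t, ((γ u ε)ᵀ * δA u ε * γ u ε) i j := by
    intro i j
    have hderiv : ∀ s, HasDerivAt (fun u => (-((γ u ε)ᵀ * JmatR n * δγ u ε)) i j)
        (((γ s ε)ᵀ * δA s ε * γ s ε) i j) s := fun s =>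
      hasDerivAt_neg_transpose_mul_mul_apply (a := (A · ε)) (δa := (δA · ε)) (g := (γ · ε))
        (δg := (δγ · ε)) (JmatR_transpose n) (JmatR_mul_self n) (hAsymm s ε) (hODE s ε)
        (hmixed s ε) i j
    have hint : IntervalIntegrable (fun u => ((γ u ε)ᵀ * δA u ε * γ u ε) i j)
        MeasureTheory.volume 0 t :=
      (((hγcont.matrix_transpose.matrix_mul hδAcont').matrix_mul hγcont).matrix_elem i j
        ).intervalIntegrable _ _
    rw [intervalIntegral.integral_eq_sub_of_hasDerivAt (fun s _ => hderiv s) hint, hδγ0]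
    simp
  refine ⟨hC, transpose_eq_of_apply_eq_intervalIntegral hC fun u => ?_⟩
  rw [transpose_mul, transpose_mul, transpose_transpose,
    transpose_eq_of_hasDerivAt (hAsymm u) (hdAε u ε), Matrix.mul_assoc]

/-- Alternative expression for `C(t,ε) = -γ(t,ε)ᵀ J ∂γ/∂ε(t,ε)`:
`C(t,ε) = ∫₀ᵗ γ(u,ε)ᵀ (∂A/∂ε)(u,ε) γ(u,ε) du`; in particular `C(t,ε)` is symmetric. -/
theorem C_integral_expression (n : ℕ)
    (A γ δA δγ : ℝ → ℝ → Matrix (Fin n ⊕ Fin n) (Fin n ⊕ Fin n) ℝ)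
    (hAsymm : ∀ t ε, (A t ε)ᵀ = A t ε)
    (hAcont : ∀ ε i j, Continuous fun t => A t ε i j)
    (hδAcont : ∀ ε i j, Continuous fun t => δA t ε i j)
    (hγ0 : ∀ ε, γ 0 ε = 1)
    (hODE : ∀ t ε i j, HasDerivAt (fun s => γ s ε i j) ((JmatR n * A t ε * γ t ε) i j) t)
    (hdε : ∀ t ε i j, HasDerivAt (fun e => γ t e i j) (δγ t ε i j) ε)
    (hdAε : ∀ t ε i j, HasDerivAt (fun e => A t e i j) (δA t ε i j) ε)
    (hmixed : ∀ t ε i j, HasDerivAt (fun s => δγ s ε i j)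
      ((JmatR n * δA t ε * γ t ε + JmatR n * A t ε * δγ t ε) i j) t)
    (t ε : ℝ) :
    (∀ i j, (-((γ t ε)ᵀ * JmatR n * δγ t ε)) i j
        = ∫ u in (0 : ℝ)..t, ((γ u ε)ᵀ * δA u ε * γ u ε) i j) ∧
    (-((γ t ε)ᵀ * JmatR n * δγ t ε))ᵀ = -((γ t ε)ᵀ * JmatR n * δγ t ε) :=
  C_integral_expression_general n A γ δA δγ hAsymm hδAcont hγ0 hODE hdε hdAε hmixed t ε
end
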